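/- arXiv:2009.02015 — 2 statements merged into one kernel-verified Lean document; each statement's English description precedes it below -/
import Mathlib

section
/- Let T be a real n×n matrix with nonnegative entries (T ≥ 0 entrywise) and spectral radius ρ = ρ(T) < 1, and suppose the spectrum of A = I - T consists of positive real numbers. Then for every real α with 0 < α < 2/(1+ρ) (where 2/(1+ρ) > 1), the spectral radius of the entrywise absolute value |T_α| of T_α = (1-α)I + αT is strictly less than 1. -/
/-! Entrywise, `|T_α| ≤ |1 - α| • 1 + α • T`. In the `∞`-operator norm, a matrix dominated
entrywise in modulus by a nonnegative one has smaller norms of all powers, so by Gelfand's formula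
it has smaller spectral radius. The spectrum of `|1 - α| • 1 + α • T` is `|1 - α| + α σ(T)`, whence
`ρ(|T_α|) ≤ |1 - α| + α ρ`, and this is `< 1` exactly in the range `0 < α < 2 / (1 + ρ)`. -/

open Matrix

/-- The spectral radius of a complex square matrix: the supremum of the moduli
of its (complex) eigenvalues. -/
noncomputable def specRad {m : Type*} [Fintype m] [DecidableEq m]
    (M : Matrix m m ℂ) : ℝ :=
  sSup ((fun z : ℂ => ‖z‖) '' spectrum ℂ M)

/-- The spectral radius of a real square matrix: the supremum of the moduli
of its complex eigenvalues. -/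
noncomputable def specRadR {m : Type*} [Fintype m] [DecidableEq m]
    (M : Matrix m m ℝ) : ℝ :=
  specRad (M.map Complex.ofReal)

open scoped ENNReal Pointwise

attribute [local instance] Matrix.linftyOpSeminormedAddCommGroup Matrix.linftyOpNormedRing
  Matrix.linftyOpNormedAlgebra

theorem spectralRadius_algebraMap_add_smul_le {𝕜 A : Type*} [NormedField 𝕜] [Ring A]
    [Algebra 𝕜 A] (c : 𝕜) {a : 𝕜} (ha : a ≠ 0) (x : A) :
    spectralRadius 𝕜 (algebraMap 𝕜 A c + a • x) ≤ ‖c‖₊ + ‖a‖₊ * spectralRadius 𝕜 x := by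
  have hσ : spectrum 𝕜 (algebraMap 𝕜 A c + a • x) = {c} + a • spectrum 𝕜 x := by
    rw [← spectrum.singleton_add_eq, ← Units.val_mk0 ha, ← Units.smul_def,
      spectrum.unit_smul_eq_smul]
    rfl
  refine iSup₂_le fun z hz => ?_
  rw [hσ, Set.singleton_add] at hz
  obtain ⟨_, ⟨μ, hμ, rfl⟩, rfl⟩ := hz
  calc (‖c + a • μ‖₊ : ℝ≥0∞) ≤ ‖c‖₊ + ‖a‖₊ * ‖μ‖₊ := by
        exact_mod_cast (nnnorm_add_le _ _).trans_eq (by rw [smul_eq_mul, nnnorm_mul])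
    _ ≤ ‖c‖₊ + ‖a‖₊ * spectralRadius 𝕜 x := by
        gcongr
        exact le_iSup₂ (f := fun k _ => (‖k‖₊ : ℝ≥0∞)) μ hμ

theorem Matrix.abs_pow_apply_le {m R : Type*} [Fintype m] [DecidableEq m] [Ring R]
    [LinearOrder R] [IsStrictOrderedRing R] {A B : Matrix m m R} (h : ∀ i j, |A i j| ≤ B i j)
    (k : ℕ) (i j : m) :
    |(A ^ k) i j| ≤ (B ^ k) i j := by
  induction k generalizing i j with
  | zero => by_cases hij : i = j <;> simp [hij]
  | succ k ih =>
    rw [pow_succ, pow_succ, mul_apply, mul_apply]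
    refine (Finset.abs_sum_le_sum_abs _ _).trans (Finset.sum_le_sum fun l _ => ?_)
    rw [abs_mul]
    exact mul_le_mul (ih i l) (h l j) (abs_nonneg _) ((abs_nonneg _).trans (ih i l))

theorem Matrix.linfty_opNNNorm_le_of_norm_apply_le {m n α : Type*} [Fintype m] [Fintype n]
    [SeminormedAddCommGroup α] {M N : Matrix m n α} (h : ∀ i j, ‖M i j‖ ≤ ‖N i j‖) :
    ‖M‖₊ ≤ ‖N‖₊ := by
  rw [linfty_opNNNorm_def, linfty_opNNNorm_def]
  exact Finset.sup_mono_fun fun i _ => Finset.sum_le_sum fun j _ => h i j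

section SpectralRadius

variable {m : Type*} [Fintype m] [DecidableEq m]

theorem specRad_nonneg (M : Matrix m m ℂ) : 0 ≤ specRad M :=
  Real.sSup_nonneg (by rintro _ ⟨z, -, rfl⟩; exact norm_nonneg z)

theorem ofReal_specRad (M : Matrix m m ℂ) :
    ENNReal.ofReal (specRad M) = spectralRadius ℂ M := by
  apply le_antisymm
  · rcases (spectrum ℂ M).eq_empty_or_nonempty with h | h
    · simp [specRad, h]
    · obtain ⟨μ, hμ, hmax⟩ := (h.image fun z : ℂ => ‖z‖).csSup_mem (M.finite_spectrum.image _)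
      rw [specRad, ← hmax, ofReal_norm, enorm_eq_nnnorm]
      exact le_iSup₂ (f := fun k _ => (‖k‖₊ : ℝ≥0∞)) μ hμ
  · refine iSup₂_le fun μ hμ => ?_
    rw [← enorm_eq_nnnorm, ← ofReal_norm]
    exact ENNReal.ofReal_le_ofReal
      (le_csSup (M.finite_spectrum.image _).bddAbove ⟨μ, hμ, rfl⟩)

theorem specRad_le_specRad_iff {M N : Matrix m m ℂ} :
    specRad M ≤ specRad N ↔ spectralRadius ℂ M ≤ spectralRadius ℂ N := by
  rw [← ofReal_specRad, ← ofReal_specRad, ENNReal.ofReal_le_ofReal_iff (specRad_nonneg N)]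

theorem spectralRadius_map_ofReal_le_of_abs_le {A B : Matrix m m ℝ}
    (h : ∀ i j, |A i j| ≤ B i j) :
    spectralRadius ℂ (A.map Complex.ofReal) ≤ spectralRadius ℂ (B.map Complex.ofReal) := by
  refine le_of_tendsto_of_tendsto'
    (spectrum.pow_nnnorm_pow_one_div_tendsto_nhds_spectralRadius _)
    (spectrum.pow_nnnorm_pow_one_div_tendsto_nhds_spectralRadius _) fun k => ?_
  gcongr
  change ‖A.map Complex.ofRealHom ^ k‖₊ ≤ ‖B.map Complex.ofRealHom ^ k‖₊
  rw [← Matrix.map_pow, ← Matrix.map_pow]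
  refine linfty_opNNNorm_le_of_norm_apply_le fun i j => ?_
  simp only [map_apply, Complex.ofRealHom_eq_coe, Complex.norm_real, Real.norm_eq_abs]
  exact (abs_pow_apply_le h k i j).trans (le_abs_self _)

theorem specRadR_le_of_abs_le {A B : Matrix m m ℝ} (h : ∀ i j, |A i j| ≤ B i j) :
    specRadR A ≤ specRadR B :=
  specRad_le_specRad_iff.mpr (spectralRadius_map_ofReal_le_of_abs_le h)

theorem specRadR_smul_one_add_smul_le (c : ℝ) {a : ℝ} (ha : a ≠ 0) (T : Matrix m m ℝ) :
    specRadR (c • 1 + a • T) ≤ |c| + |a| * specRadR T := by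
  have hmap : (c • 1 + a • T).map Complex.ofReal =
      algebraMap ℂ _ (c : ℂ) + (a : ℂ) • T.map Complex.ofReal := by
    ext i j
    by_cases hij : i = j <;> simp [hij, algebraMap_eq_diagonal]
  have hnorm (x : ℝ) : ENNReal.ofReal |x| = ‖(x : ℂ)‖₊ := by
    rw [← Real.norm_eq_abs, ← Complex.norm_real, ofReal_norm, enorm_eq_nnnorm]
  have hrad := specRad_nonneg (T.map Complex.ofReal)
  rw [← ENNReal.ofReal_le_ofReal_iff (by positivity), specRadR, ofReal_specRad, hmap,
    ENNReal.ofReal_add (abs_nonneg _) (by positivity), ENNReal.ofReal_mul (abs_nonneg _),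
    hnorm, hnorm, specRadR, ofReal_specRad]
  exact spectralRadius_algebraMap_add_smul_le _ (by exact_mod_cast ha) _

end SpectralRadius

theorem abs_smul_one_add_smul_apply_le {m : Type*} [DecidableEq m] (c : ℝ) {a : ℝ} (ha : 0 ≤ a)
    {T : Matrix m m ℝ} (hT : ∀ i j, 0 ≤ T i j) (i j : m) :
    |(c • 1 + a • T) i j| ≤ (|c| • 1 + a • T) i j := by
  have h1 : (0 : ℝ) ≤ (1 : Matrix m m ℝ) i j := by
    by_cases hij : i = j <;> simp [one_apply, hij]
  simp only [Matrix.add_apply, Matrix.smul_apply, smul_eq_mul]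
  calc |c * (1 : Matrix m m ℝ) i j + a * T i j| ≤ |c * (1 : Matrix m m ℝ) i j| + |a * T i j| :=
        abs_add_le _ _
    _ = |c| * (1 : Matrix m m ℝ) i j + a * T i j := by
        rw [abs_mul, abs_mul, abs_of_nonneg h1, abs_of_nonneg ha, abs_of_nonneg (hT i j)]

theorem abs_one_sub_add_mul_lt_one {α ρ : ℝ} (hρ0 : 0 ≤ ρ) (hρ1 : ρ < 1) (hα : 0 < α)
    (hα2 : α < 2 / (1 + ρ)) : |1 - α| + α * ρ < 1 := by
  rw [lt_div_iff₀ (by linarith)] at hα2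
  rcases abs_cases (1 - α) with ⟨h, -⟩ | ⟨h, -⟩ <;> rw [h] <;> nlinarith

theorem asynchronous_first_order_richardson_convergence_general
    {n : ℕ} (T : Matrix (Fin n) (Fin n) ℝ)
    (hT : ∀ i j, 0 ≤ T i j)
    (ρ : ℝ) (hρ : ρ = specRadR T) (hρ1 : ρ < 1) :
    1 < 2 / (1 + ρ) ∧
    ∀ α : ℝ, 0 < α → α < 2 / (1 + ρ) →
      specRadR (Matrix.of fun i j =>
        |((1 - α) • (1 : Matrix (Fin n) (Fin n) ℝ) + α • T) i j|) < 1 := by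
  have hρ0 : 0 ≤ ρ := hρ ▸ specRad_nonneg _
  refine ⟨(one_lt_div (by linarith)).mpr (by linarith), fun α hα hα2 => ?_⟩
  calc _ ≤ specRadR (|1 - α| • 1 + α • T) := specRadR_le_of_abs_le fun i j => by
        rw [of_apply, abs_abs]; exact abs_smul_one_add_smul_apply_le _ hα.le hT i j
    _ ≤ |1 - α| + α * ρ := (specRadR_smul_one_add_smul_le _ hα.ne' T).trans_eq
        (by rw [abs_abs, abs_of_pos hα, hρ])
    _ < 1 := abs_one_sub_add_mul_lt_one hρ0 hρ1 hα hα2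

theorem asynchronous_first_order_richardson_convergence
    {n : ℕ} (T : Matrix (Fin n) (Fin n) ℝ)
    (hT : ∀ i j, 0 ≤ T i j)
    (ρ : ℝ) (hρ : ρ = specRadR T) (hρ1 : ρ < 1)
    (hspec : ∀ μ ∈ spectrum ℂ
        (((1 : Matrix (Fin n) (Fin n) ℝ) - T).map Complex.ofReal),
      ∃ r : ℝ, 0 < r ∧ μ = (r : ℂ)) :
    1 < 2 / (1 + ρ) ∧
    ∀ α : ℝ, 0 < α → α < 2 / (1 + ρ) →
      specRadR (Matrix.of fun i j =>
        |((1 - α) • (1 : Matrix (Fin n) (Fin n) ℝ) + α • T) i j|) < 1 :=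
  asynchronous_first_order_richardson_convergence_general T hT ρ hρ hρ1
end

section
/- Let A be a complex n×n matrix whose entries are such that I - αA is a real matrix for the given real α (e.g., A real), and let α, β be real numbers. If λ ∈ ℂ is an eigenvalue of the entrywise absolute value |T_{α,β}| of the 2n×2n block matrix T_{α,β} = [[(1+β)(I - αA), -βI], [I, 0]], then there exists an eigenvalue μ of the entrywise absolute value |I - αA| such that λ² - |1+β|·μ·λ - |β| = 0. -/
open Matrix

/-! Taking entrywise absolute values preserves the shape `[[c • B, d • 1], [1, 0]]`, so it suffices
to treat such block matrices. If `(x, y)` is an eigenvector for `λ`, the second block row gives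
`x = λ • y`, and the first then reads `(c λ) • B y = (λ ^ 2 - d) • y` with `y ≠ 0`. If `c λ ≠ 0`,
`y` is an eigenvector of `B`; otherwise `λ ^ 2 = d` and any eigenvalue of `B` will do. -/

namespace Matrix

/-- The block companion matrix of the quadratic pencil `λ ^ 2 - c λ B - d`. -/
def quadraticCompanion {m R : Type*} [DecidableEq m] [Semiring R] (B : Matrix m m R) (c d : R) :
    Matrix (m ⊕ m) (m ⊕ m) R :=
  fromBlocks (c • B) (d • 1) 1 0

theorem map_norm_quadraticCompanion {m : Type*} [DecidableEq m] (M : Matrix m m ℂ) (a b : ℂ) :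
    (quadraticCompanion M a b).map (fun z => ((‖z‖ : ℝ) : ℂ)) =
      quadraticCompanion (M.map fun z => ((‖z‖ : ℝ) : ℂ)) ‖a‖ ‖b‖ := by
  ext (i | i) (j | j) <;> by_cases h : i = j <;> simp [quadraticCompanion, h]

variable {K : Type*} [Field K] {m : Type*} [Fintype m] [DecidableEq m]

theorem mem_spectrum_iff_exists_mulVec_eq_smul {M : Matrix m m K} {μ : K} :
    μ ∈ spectrum K M ↔ ∃ v ≠ 0, M *ᵥ v = μ • v := by
  rw [← spectrum_toLin', ← Module.End.hasEigenvalue_iff_mem_spectrum]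
  constructor
  · intro h
    obtain ⟨v, hv⟩ := h.exists_hasEigenvector
    exact ⟨v, hv.2, Module.End.mem_eigenspace_iff.1 hv.1⟩
  · rintro ⟨v, hv, hMv⟩
    exact Module.End.hasEigenvalue_of_hasEigenvector ⟨Module.End.mem_eigenspace_iff.2 hMv, hv⟩

theorem exists_smul_mulVec_eq_of_mem_spectrum_quadraticCompanion {B : Matrix m m K} {c d l : K}
    (hl : l ∈ spectrum K (quadraticCompanion B c d)) :
    ∃ y ≠ 0, (c * l) • (B *ᵥ y) = (l ^ 2 - d) • y := by
  obtain ⟨v, hv, hTv⟩ := mem_spectrum_iff_exists_mulVec_eq_smul.1 hl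
  set x := v ∘ Sum.inl
  set y := v ∘ Sum.inr
  have hv_eq : v = Sum.elim x y := (Sum.elim_comp_inl_inr v).symm
  rw [hv_eq, quadraticCompanion, fromBlocks_mulVec] at hTv
  have h_bot : x = l • y := funext fun i => by simpa using congrFun hTv (Sum.inr i)
  have h_top : c • (B *ᵥ x) + d • y = l • x :=
    funext fun i => by simpa [smul_mulVec] using congrFun hTv (Sum.inl i)
  refine ⟨y, fun hy => hv ?_, ?_⟩
  · rw [hv_eq, h_bot, hy, smul_zero, Sum.elim_zero_zero]
  · rw [h_bot, mulVec_smul] at h_top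
    rw [sub_smul, eq_sub_iff_add_eq, mul_smul, h_top, sq, mul_smul]

theorem exists_mem_spectrum_of_smul_mulVec_eq [IsAlgClosed K] {B : Matrix m m K} {a b : K}
    {y : m → K} (hy : y ≠ 0) (hBy : a • (B *ᵥ y) = b • y) :
    ∃ μ ∈ spectrum K B, b = a * μ := by
  by_cases ha : a = 0
  · have hb : b = 0 := by
      rw [ha, zero_smul, eq_comm, smul_eq_zero] at hBy
      exact hBy.resolve_right hy
    have : Nonempty m := by
      by_contra h
      exact hy (funext fun i => (not_nonempty_iff.1 h).elim i)
    obtain ⟨μ, hμ⟩ := spectrum.nonempty_of_isAlgClosed_of_finiteDimensional K B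
    exact ⟨μ, hμ, by simp [ha, hb]⟩
  · refine ⟨b / a, mem_spectrum_iff_exists_mulVec_eq_smul.2 ⟨y, hy, ?_⟩, by field_simp⟩
    rw [div_eq_inv_mul, mul_smul, ← hBy, smul_smul, inv_mul_cancel₀ ha, one_smul]

theorem exists_mem_spectrum_of_mem_spectrum_quadraticCompanion [IsAlgClosed K]
    {B : Matrix m m K} {c d l : K} (hl : l ∈ spectrum K (quadraticCompanion B c d)) :
    ∃ μ ∈ spectrum K B, l ^ 2 - c * μ * l - d = 0 := by
  obtain ⟨y, hy, hBy⟩ := exists_smul_mulVec_eq_of_mem_spectrum_quadraticCompanion hl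
  obtain ⟨μ, hμ, h⟩ := exists_mem_spectrum_of_smul_mulVec_eq hy hBy
  exact ⟨μ, hμ, by linear_combination h⟩

end Matrix

theorem abs_second_order_richardson_eigenvalue_quadratic_general
    {n : ℕ} (A : Matrix (Fin n) (Fin n) ℂ) (α β : ℝ)
    (l : ℂ)
    (hl : l ∈ spectrum ℂ
      (Matrix.of fun i j =>
        ((Norm.norm
          ((Matrix.fromBlocks
            (((1 + β : ℝ) : ℂ) • ((1 : Matrix (Fin n) (Fin n) ℂ) - (α : ℂ) • A))
            (-((β : ℝ) : ℂ) • (1 : Matrix (Fin n) (Fin n) ℂ))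
            (1 : Matrix (Fin n) (Fin n) ℂ)
            (0 : Matrix (Fin n) (Fin n) ℂ)) i j) : ℝ) : ℂ))) :
    ∃ μ ∈ spectrum ℂ
      (Matrix.of fun i j =>
        ((Norm.norm (((1 : Matrix (Fin n) (Fin n) ℂ) - (α : ℂ) • A) i j) : ℝ) : ℂ)),
      l ^ 2 - ((|1 + β| : ℝ) : ℂ) * μ * l - ((|β| : ℝ) : ℂ) = 0 := by
  have h_abs := map_norm_quadraticCompanion (1 - (α : ℂ) • A) ((1 + β : ℝ) : ℂ) (-(β : ℂ))
  rw [norm_neg, Complex.norm_real, Complex.norm_real, Real.norm_eq_abs, Real.norm_eq_abs]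
    at h_abs
  exact exists_mem_spectrum_of_mem_spectrum_quadraticCompanion (h_abs ▸ hl)

theorem abs_second_order_richardson_eigenvalue_quadratic
    {n : ℕ} (A : Matrix (Fin n) (Fin n) ℂ) (α β : ℝ)
    (hreal : ∀ i j, ∃ r : ℝ,
      ((1 : Matrix (Fin n) (Fin n) ℂ) - (α : ℂ) • A) i j = (r : ℂ))
    (l : ℂ)
    (hl : l ∈ spectrum ℂ
      (Matrix.of fun i j =>
        ((Norm.norm
          ((Matrix.fromBlocks
            (((1 + β : ℝ) : ℂ) • ((1 : Matrix (Fin n) (Fin n) ℂ) - (α : ℂ) • A))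
            (-((β : ℝ) : ℂ) • (1 : Matrix (Fin n) (Fin n) ℂ))
            (1 : Matrix (Fin n) (Fin n) ℂ)
            (0 : Matrix (Fin n) (Fin n) ℂ)) i j) : ℝ) : ℂ))) :
    ∃ μ ∈ spectrum ℂ
      (Matrix.of fun i j =>
        ((Norm.norm (((1 : Matrix (Fin n) (Fin n) ℂ) - (α : ℂ) • A) i j) : ℝ) : ℂ)),
      l ^ 2 - ((|1 + β| : ℝ) : ℂ) * μ * l - ((|β| : ℝ) : ℂ) = 0 :=
  abs_second_order_richardson_eigenvalue_quadratic_general A α β l hl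
end
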